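/- arXiv:1311.3939 — 7 statements merged into one kernel-verified Lean document; each statement's English description precedes it below -/
import Mathlib

section
/- For all positive integers x and y with x ≥ 7y, the binomial coefficient satisfies C(x + y, y) ≤ e^{x/2}. -/
/-!
Bounding `k ^ k / k !` by `e ^ k` gives `C(n, k) ≤ (e n / k) ^ k`. For `n = x + y`, `k = y` the
ratio `u = (x + y) / y` is at least `8`, and `e u ≤ e ^ ((u - 1) / 2)` there because
`8 ≤ e ^ (5 / 2)`; raising to the power `y` turns the right-hand side into `e ^ (x / 2)`.
-/

open Real
open scoped Nat

theorem Nat.choose_le_exp_one_mul_div_pow (n k : ℕ) :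
    (n.choose k : ℝ) ≤ (exp 1 * n / k) ^ k := by
  rcases Nat.eq_zero_or_pos k with rfl | hk
  · simp
  calc (n.choose k : ℝ) ≤ (n : ℝ) ^ k / k ! := Nat.choose_le_pow_div k n
    _ = (n / k : ℝ) ^ k * ((k : ℝ) ^ k / k !) := by
        rw [div_pow]; field_simp
    _ ≤ (n / k : ℝ) ^ k * exp k := by gcongr; exact pow_div_factorial_le_exp _ k.cast_nonneg k
    _ = (exp 1 * n / k) ^ k := by rw [← exp_one_pow]; ring

theorem eight_le_exp_five_div_two : (8 : ℝ) ≤ exp (5 / 2) := by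
  have h : exp (5 / 2) = exp (5 / 4) ^ 2 := by rw [← exp_nat_mul]; norm_num
  have := quadratic_le_exp_of_nonneg (show (0 : ℝ) ≤ 5 / 4 by norm_num)
  rw [h]
  nlinarith

theorem exp_one_mul_le_exp_sub_one_div_two {u : ℝ} (hu : 8 ≤ u) :
    exp 1 * u ≤ exp ((u - 1) / 2) := by
  have hsplit : exp ((u - 1) / 2) = exp 1 * (exp (5 / 2) * exp ((u - 8) / 2)) := by
    rw [← exp_add, ← exp_add]; ring_nf
  have htangent := add_one_le_exp ((u - 8) / 2)
  rw [hsplit]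
  gcongr
  nlinarith [eight_le_exp_five_div_two, exp_pos ((u - 8) / 2)]

theorem choose_le_exp_half_general (x y : ℕ) (hy : 0 < y) (hxy : 7 * y ≤ x) :
    ((x + y).choose y : ℝ) ≤ Real.exp ((x : ℝ) / 2) := by
  have hy' : (0 : ℝ) < y := by exact_mod_cast hy
  set u : ℝ := (x + y) / y with hu_def
  have hu : 8 ≤ u := by
    rw [hu_def, le_div_iff₀ hy']
    exact_mod_cast (by omega : 8 * y ≤ x + y)
  calc ((x + y).choose y : ℝ) ≤ (exp 1 * ((x + y : ℕ) : ℝ) / y) ^ y :=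
        Nat.choose_le_exp_one_mul_div_pow _ _
    _ = (exp 1 * u) ^ y := by push_cast; ring
    _ ≤ exp ((u - 1) / 2) ^ y := by gcongr; exact exp_one_mul_le_exp_sub_one_div_two hu
    _ = exp (x / 2) := by
        rw [← exp_nat_mul, hu_def]
        congr 1
        field_simp
        ring

/-- The counting inequality: for positive integers `x, y` with `x ≥ 7y`,
`C(x + y, y) ≤ e^{x/2}`. -/
theorem choose_le_exp_half (x y : ℕ) (hx : 0 < x) (hy : 0 < y) (hxy : 7 * y ≤ x) :
    ((x + y).choose y : ℝ) ≤ Real.exp ((x : ℝ) / 2) :=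
  choose_le_exp_half_general x y hy hxy
end

section
/- Let h, h', b, b', α be natural numbers with b' > b ≥ 1. If ⌊(h' + 1)/b'⌋ < ⌊(h + 1)/b⌋, then ⌊(h' + α + 1)/b'⌋ ≤ ⌊(h + α)/b⌋, where ⌊·⌋ denotes the floor of the quotient (natural-number division). -/
/-- The key floor inequality for the restricted greedy scheduling algorithm:
if `b' > b ≥ 1` and `⌊(h' + 1)/b'⌋ < ⌊(h + 1)/b⌋`, then for every `α`,
`⌊(h' + α + 1)/b'⌋ ≤ ⌊(h + α)/b⌋` (natural-number division). -/
theorem floor_load_persists (h h' b b' α : ℕ) (hb : 1 ≤ b) (hbb : b < b')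
    (hlt : (h' + 1) / b' < (h + 1) / b) :
    (h' + α + 1) / b' ≤ (h + α) / b := by
  have hb0 : 0 < b := hb
  have hb'0 : 0 < b' := lt_trans hb0 hbb
  set q' := (h' + 1) / b' with hq'
  set q := (h + 1) / b with hqd
  have hqb : b * q ≤ h + 1 := by
    rw [hqd, Nat.mul_comm]; exact Nat.div_mul_le_self _ _
  have hmod : h' + 1 < b' * q' + b' := by
    have h1 := Nat.div_add_mod (h' + 1) b'
    have h2 := Nat.mod_lt (h' + 1) hb'0
    rw [hq']; omega
  rcases α with _ | a
  · -- α = 0 : show q' ≤ h / b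
    simp only [Nat.add_zero]
    have h3 : (q' + 1) * b ≤ q * b := Nat.mul_le_mul_right _ hlt
    have h4 : q * b ≤ h + 1 := by rw [Nat.mul_comm] at hqb; exact hqb
    have h6 : q' * b ≤ h := by nlinarith
    exact (Nat.le_div_iff_mul_le hb0).mpr h6
  · calc (h' + (a + 1) + 1) / b' ≤ (b' * (q' + 1) + a) / b' := by
          apply Nat.div_le_div_right
          have : b' * (q' + 1) = b' * q' + b' := by ring
          omega
      _ = q' + 1 + a / b' := Nat.mul_add_div hb'0 _ _
      _ ≤ q + a / b := by
          have h5 : a / b' ≤ a / b := Nat.div_le_div_left (le_of_lt hbb) hb0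
          exact add_le_add hlt h5
      _ = (b * q + a) / b := (Nat.mul_add_div hb0 _ _).symm
      _ ≤ (h + (a + 1)) / b := Nat.div_le_div_right (by omega)
end

section
/- Let V be a finite type, let G be a simple graph on V, and let w be a nonnegative real-valued weight function on the edges of G. Let M be a matching of G (a set of edges of G, no two of which share a vertex) with the property that every edge e of G shares an endpoint with some edge f ∈ M satisfying w(f) ≥ w(e). Then for every matching M' of G, ∑_{e ∈ M'} w(e) ≤ 2·∑_{f ∈ M} w(f). -/
/-!
Charge each edge `e` of `M'` to an edge `B e` of `M` that blocks it. Since `B e` meets `e` and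
the edges of `M'` are vertex-disjoint, each edge of `M` is charged at most twice, once through
each endpoint, and never by more than its own weight.
-/

open Finset

theorem Finset.sum_le_nsmul_sum_of_card_fiber_le {ι κ M : Type*} [AddCommMonoid M]
    [PartialOrder M] [IsOrderedAddMonoid M] [DecidableEq κ] {s : Finset ι} {t : Finset κ}
    {g : ι → κ} {f : ι → M} {h : κ → M} {n : ℕ} (hg : ∀ i ∈ s, g i ∈ t)
    (hfh : ∀ i ∈ s, f i ≤ h (g i)) (hh : ∀ j ∈ t, 0 ≤ h j)
    (hn : ∀ j ∈ t, #{i ∈ s | g i = j} ≤ n) :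
    ∑ i ∈ s, f i ≤ n • ∑ j ∈ t, h j :=
  calc ∑ i ∈ s, f i ≤ ∑ i ∈ s, h (g i) := sum_le_sum hfh
    _ = ∑ j ∈ t, #{i ∈ s | g i = j} • h j := by
      rw [← sum_fiberwise_of_maps_to hg]
      refine sum_congr rfl fun j _ => ?_
      rw [← sum_const]
      exact sum_congr rfl fun i hi => by rw [(mem_filter.mp hi).2]
    _ ≤ ∑ j ∈ t, n • h j := sum_le_sum fun j hj => nsmul_le_nsmul_left (hh j hj) (hn j hj)
    _ = n • ∑ j ∈ t, h j := (smul_sum ..).symm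

theorem Sym2.card_le_two_of_pairwise_disjoint_of_forall_meets {α : Type*} [DecidableEq α]
    {M s : Finset (Sym2 α)} (hM : ∀ e ∈ M, ∀ f ∈ M, e ≠ f → ∀ v : α, v ∈ e → v ∉ f)
    (hs : s ⊆ M) (z : Sym2 α) (hmeet : ∀ e ∈ s, ∃ v ∈ e, v ∈ z) : #s ≤ 2 :=
  calc #s ≤ #z.toFinset := by
        refine card_le_card_of_forall_subsingleton (fun e v => v ∈ e) (fun e he => ?_)
          fun v _ e₁ he₁ e₂ he₂ => ?_
        · obtain ⟨v, hve, hvz⟩ := hmeet e he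
          exact ⟨v, Sym2.mem_toFinset.mpr hvz, hve⟩
        · by_contra hne
          exact hM e₁ (hs he₁.1) e₂ (hs he₂.1) hne v he₁.2 he₂.2
    _ ≤ 2 := by rw [Sym2.card_toFinset]; split_ifs <;> norm_num

theorem greedy_matching_half_approx_general {V : Type*} [Fintype V]
    (G : SimpleGraph V) [DecidableRel G.Adj]
    (w : Sym2 V → ℝ) (hw : ∀ e ∈ G.edgeFinset, 0 ≤ w e)
    (M : Finset (Sym2 V)) (hM : M ⊆ G.edgeFinset)
    (hblock : ∀ e ∈ G.edgeFinset, ∃ f ∈ M, (∃ v : V, v ∈ e ∧ v ∈ f) ∧ w e ≤ w f)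
    (M' : Finset (Sym2 V)) (hM' : M' ⊆ G.edgeFinset)
    (hM'match : ∀ e ∈ M', ∀ f ∈ M', e ≠ f → ∀ v : V, v ∈ e → v ∉ f) :
    ∑ e ∈ M', w e ≤ 2 * ∑ f ∈ M, w f := by
  classical
  choose! B hBM hmeet hle using fun e (he : e ∈ M') => hblock e (hM' he)
  have hfiber : ∀ f ∈ M, #{e ∈ M' | B e = f} ≤ 2 := fun f _ =>
    Sym2.card_le_two_of_pairwise_disjoint_of_forall_meets hM'match (filter_subset _ _) f
      fun e he => by
        obtain ⟨heM', rfl⟩ := mem_filter.mp he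
        exact hmeet e heM'
  have hcharge := sum_le_nsmul_sum_of_card_fiber_le hBM hle (fun f hf => hw f (hM hf)) hfiber
  rwa [two_nsmul, ← two_mul] at hcharge

/-- A maximal-type matching `M` in which every edge of the graph is blocked by
an incident matching edge of at least equal weight has total weight at least
half the weight of any matching `M'`. -/
theorem greedy_matching_half_approx {V : Type*} [Fintype V] [DecidableEq V]
    (G : SimpleGraph V) [DecidableRel G.Adj]
    (w : Sym2 V → ℝ) (hw : ∀ e ∈ G.edgeFinset, 0 ≤ w e)
    (M : Finset (Sym2 V)) (hM : M ⊆ G.edgeFinset)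
    (hMmatch : ∀ e ∈ M, ∀ f ∈ M, e ≠ f → ∀ v : V, v ∈ e → v ∉ f)
    (hblock : ∀ e ∈ G.edgeFinset, ∃ f ∈ M, (∃ v : V, v ∈ e ∧ v ∈ f) ∧ w e ≤ w f)
    (M' : Finset (Sym2 V)) (hM' : M' ⊆ G.edgeFinset)
    (hM'match : ∀ e ∈ M', ∀ f ∈ M', e ≠ f → ∀ v : V, v ∈ e → v ∉ f) :
    ∑ e ∈ M', w e ≤ 2 * ∑ f ∈ M, w f :=
  greedy_matching_half_approx_general G w hw M hM hblock M' hM' hM'match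
end

section
/- Let k ≥ 1 be an integer, let X be a type, let I be a finite index set, let F : I → Finset X be a family of sets with |F_i| ≤ k for every i ∈ I, and let w : I → ℝ be nonnegative weights. Let G ⊆ I be such that the sets {F_j : j ∈ G} are pairwise disjoint, and suppose that for every i ∈ I there exists j ∈ G with F_i ∩ F_j ≠ ∅ and w(j) ≥ w(i). Then for every O ⊆ I such that the sets {F_i : i ∈ O} are pairwise disjoint, ∑_{i ∈ O} w(i) ≤ k·∑_{j ∈ G} w(j). -/
/-!
Charge every set `F i` of the disjoint family `O` to a greedy set `F (b i)` that blocks it and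
weighs at least as much. A greedy set `F j` is charged by at most `|F j| ≤ k` sets of `O`, since
these meet `F j` in pairwise distinct elements, so
`∑_{i ∈ O} w i ≤ ∑_{i ∈ O} w (b i) ≤ k ∑_{j ∈ G} w j`.
-/

open Finset

namespace Finset

theorem card_filter_inter_nonempty_le {ι X : Type*} [DecidableEq X] {s : Finset ι}
    {F : ι → Finset X}
    (hs : ∀ i ∈ s, ∀ j ∈ s, i ≠ j → Disjoint (F i) (F j)) (S : Finset X) :
    #{i ∈ s | (F i ∩ S).Nonempty} ≤ #S := by
  refine card_le_card_of_forall_subsingleton (fun i x => x ∈ F i)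
    (fun i hi => (mem_filter.1 hi).2.imp fun _ hx => (mem_inter.1 hx).symm) ?_
  rintro x - i ⟨hi, hxi⟩ i' ⟨hi', hxi'⟩
  by_contra hne
  exact disjoint_left.1 (hs i (mem_filter.1 hi).1 i' (mem_filter.1 hi').1 hne) hxi hxi'

theorem sum_le_mul_sum_of_charging {ι κ R : Type*} [DecidableEq κ] [CommSemiring R]
    [PartialOrder R] [IsOrderedRing R] {s : Finset ι} {t : Finset κ} {w : ι → R} {v : κ → R}
    (b : ι → κ) (k : ℕ) (hb : ∀ i ∈ s, b i ∈ t) (hwv : ∀ i ∈ s, w i ≤ v (b i))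
    (hfiber : ∀ j ∈ t, #{i ∈ s | b i = j} ≤ k) (hv : ∀ j ∈ t, 0 ≤ v j) :
    ∑ i ∈ s, w i ≤ k * ∑ j ∈ t, v j := by
  have hfiber_sum : ∀ j ∈ t, ∑ i ∈ s with b i = j, v (b i) = #{i ∈ s | b i = j} * v j := by
    intro j _
    rw [sum_congr rfl fun i hi => congrArg v (mem_filter.1 hi).2, sum_const, nsmul_eq_mul]
  calc ∑ i ∈ s, w i ≤ ∑ i ∈ s, v (b i) := sum_le_sum hwv
    _ = ∑ j ∈ t, ∑ i ∈ s with b i = j, v (b i) := (sum_fiberwise_of_maps_to hb _).symm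
    _ = ∑ j ∈ t, (#{i ∈ s | b i = j} : R) * v j := sum_congr rfl hfiber_sum
    _ ≤ ∑ j ∈ t, (k : R) * v j :=
      sum_le_sum fun j hj => mul_le_mul_of_nonneg_right (Nat.mono_cast (hfiber j hj)) (hv j hj)
    _ = k * ∑ j ∈ t, v j := (mul_sum _ _ _).symm

end Finset

theorem greedy_k_set_packing_approx_general {X : Type*} [DecidableEq X] {I : Type*}
    (k : ℕ) (F : I → Finset X) (hF : ∀ i : I, (F i).card ≤ k)
    (w : I → ℝ) (hw : ∀ i : I, 0 ≤ w i)
    (G : Finset I)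
    (hblock : ∀ i : I, ∃ j ∈ G, (F i ∩ F j).Nonempty ∧ w i ≤ w j)
    (O : Finset I) (hOdisj : ∀ i ∈ O, ∀ j ∈ O, i ≠ j → Disjoint (F i) (F j)) :
    ∑ i ∈ O, w i ≤ (k : ℝ) * ∑ j ∈ G, w j := by
  classical
  choose b hbG hbF hbw using hblock
  refine sum_le_mul_sum_of_charging b k (fun i _ => hbG i) (fun i _ => hbw i) (fun j _ => ?_)
    (fun j _ => hw j)
  calc #{i ∈ O | b i = j} ≤ #{i ∈ O | (F i ∩ F j).Nonempty} :=
        card_le_card <| monotone_filter_right _ fun i _ hij => hij ▸ hbF i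
    _ ≤ #(F j) := card_filter_inter_nonempty_le hOdisj (F j)
    _ ≤ k := hF j

/-- Greedy `1/k`-approximation for `k`-single-minded bidders: if the greedily chosen
family `G` of pairwise-disjoint sets (each of size at most `k`) blocks every bidder's
set with a set of at least equal weight, then any pairwise-disjoint family `O`
has total weight at most `k` times that of `G`. -/
theorem greedy_k_set_packing_approx {X : Type*} [DecidableEq X] {I : Type*} [Fintype I]
    (k : ℕ) (hk : 1 ≤ k) (F : I → Finset X) (hF : ∀ i : I, (F i).card ≤ k)
    (w : I → ℝ) (hw : ∀ i : I, 0 ≤ w i)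
    (G : Finset I) (hGdisj : ∀ i ∈ G, ∀ j ∈ G, i ≠ j → Disjoint (F i) (F j))
    (hblock : ∀ i : I, ∃ j ∈ G, (F i ∩ F j).Nonempty ∧ w i ≤ w j)
    (O : Finset I) (hOdisj : ∀ i ∈ O, ∀ j ∈ O, i ≠ j → Disjoint (F i) (F j)) :
    ∑ i ∈ O, w i ≤ (k : ℝ) * ∑ j ∈ G, w j :=
  greedy_k_set_packing_approx_general k F hF w hw G hblock O hOdisj
end

section
/- Consider the restricted greedy allocation process with machines 1,…,n, positive integer bid vector b, tie-breaking linear order π, and allowed sets M_1,…,M_m. Fix a machine i₀ and let b' be a bid vector that agrees with b on every machine except i₀ and satisfies b'_{i₀} > b_{i₀} ≥ 1. Then for every time t ∈ {1,…,m} and every machine k ≠ i₀, the number of jobs among the first t jobs assigned to machine k under bids b' is at most the number assigned to machine k under bids b. -/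
/-- `greedyHeight m assign t i` is the number of jobs among the first `t` jobs
(the jobs being `Fin m`) that `assign` sends to machine `i`. -/
def greedyHeight {n : ℕ} (m : ℕ) (assign : Fin m → Fin n) (t : ℕ) (i : Fin n) : ℕ :=
  (Finset.univ.filter (fun s : Fin m => (s : ℕ) < t ∧ assign s = i)).card

/-- `IsRestrictedGreedy b π Msets assign` says that `assign` is the outcome of the
restricted greedy allocation process with bids `b`, tie-breaking order given by the
injective labelling `π`, and allowed machine sets `Msets`: each job `t` goes to a
machine of `Msets t` minimizing the post-placement load `⌊(h + 1)/bid⌋`,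
ties broken by `π`. -/
def IsRestrictedGreedy {n m : ℕ} (b : Fin n → ℕ) (π : Fin n → ℕ)
    (Msets : Fin m → Finset (Fin n)) (assign : Fin m → Fin n) : Prop :=
  ∀ t : Fin m, assign t ∈ Msets t ∧
    ∀ j ∈ Msets t, j ≠ assign t →
      (greedyHeight m assign t (assign t) + 1) / b (assign t)
          < (greedyHeight m assign t j + 1) / b j ∨
      ((greedyHeight m assign t (assign t) + 1) / b (assign t)
          = (greedyHeight m assign t j + 1) / b j ∧ π (assign t) < π j)

lemma gh_zero {n m : ℕ} (assign : Fin m → Fin n) (i : Fin n) :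
    greedyHeight m assign 0 i = 0 := by
  simp [greedyHeight]

lemma gh_succ {n m : ℕ} (assign : Fin m → Fin n) {t : ℕ} (ht : t < m) (i : Fin n) :
    greedyHeight m assign (t + 1) i =
      greedyHeight m assign t i + if assign ⟨t, ht⟩ = i then 1 else 0 := by
  classical
  unfold greedyHeight
  have hsplit : (Finset.univ.filter (fun s : Fin m => (s : ℕ) < t + 1 ∧ assign s = i)) =
      (Finset.univ.filter (fun s : Fin m => (s : ℕ) < t ∧ assign s = i)) ∪
      (Finset.univ.filter (fun s : Fin m => s = ⟨t, ht⟩ ∧ assign s = i)) := by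
    ext s
    simp only [Finset.mem_filter, Finset.mem_union, Finset.mem_univ, true_and]
    constructor
    · rintro ⟨hlt, ha⟩
      rcases Nat.lt_or_ge (s : ℕ) t with h | h
      · exact Or.inl ⟨h, ha⟩
      · have hst : (s : ℕ) = t := by omega
        exact Or.inr ⟨Fin.ext (by simpa using hst), ha⟩
    · rintro (⟨h, ha⟩ | ⟨h, ha⟩)
      · exact ⟨by omega, ha⟩
      · refine ⟨?_, ha⟩; subst h; simp
  rw [hsplit, Finset.card_union_of_disjoint]
  · congr 1
    have hset : (Finset.univ.filter (fun s : Fin m => s = ⟨t, ht⟩ ∧ assign s = i)) =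
        if assign ⟨t, ht⟩ = i then {(⟨t, ht⟩ : Fin m)} else ∅ := by
      split_ifs with hA
      · ext s
        by_cases hs : s = (⟨t, ht⟩ : Fin m) <;> simp [hs, hA]
      · ext s
        simp only [Finset.mem_filter, Finset.mem_univ, true_and, Finset.notMem_empty,
          iff_false]
        rintro ⟨rfl, h⟩
        exact hA h
    rw [hset]
    split_ifs <;> simp
  · rw [Finset.disjoint_left]
    intro s h1 h2
    simp only [Finset.mem_filter, Finset.mem_univ, true_and] at h1 h2
    have : (s : ℕ) = t := by rw [h2.1]
    omega

lemma nat_step (x B : ℕ) (hB : 0 < B) :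
    (x % B + 1 < B ∧ (x + 1) / B = x / B ∧ (x + 1) % B = x % B + 1) ∨
    (x % B + 1 = B ∧ (x + 1) / B = x / B + 1 ∧ (x + 1) % B = 0) := by
  have key : x + 1 = B * (x / B) + (x % B + 1) := by
    rw [← Nat.add_assoc, Nat.div_add_mod]
  have hlt : x % B < B := Nat.mod_lt x hB
  rcases Nat.lt_or_ge (x % B + 1) B with h | h
  · left
    refine ⟨h, ?_, ?_⟩
    · rw [key, Nat.mul_add_div hB, Nat.div_eq_of_lt h, Nat.add_zero]
    · rw [key, Nat.mul_add_mod, Nat.mod_eq_of_lt h]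
  · right
    have he : x % B + 1 = B := le_antisymm hlt h
    refine ⟨he, ?_, ?_⟩
    · rw [key, he, Nat.mul_add_div hB, Nat.div_self hB]
    · rw [key, he, Nat.mul_add_mod, Nat.mod_self]

lemma chain_absurd (A A2 Bv C pi pk : ℕ) (hAA : A = A2)
    (d1 : A < Bv ∨ (A = Bv ∧ pk < pi)) (hBC : Bv ≤ C)
    (d2 : C < A2 ∨ (C = A2 ∧ pi < pk)) : False := by omega

lemma chain_lt (A Bv C D pi pk : ℕ)
    (d1 : A < Bv ∨ (A = Bv ∧ pk < pi)) (hBC : Bv ≤ C)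
    (d2 : C < D ∨ (C = D ∧ pi < pk)) : A < D := by omega

lemma arith_both (B B' q r q' r' nq nr nq' nr' : ℕ) (hBB' : B < B')
    (hst : (r + 1 < B ∧ nq = q ∧ nr = r + 1) ∨ (r + 1 = B ∧ nq = q + 1 ∧ nr = 0))
    (hst' : (r' + 1 < B' ∧ nq' = q' ∧ nr' = r' + 1) ∨ (r' + 1 = B' ∧ nq' = q' + 1 ∧ nr' = 0))
    (hinv : q' < q ∨ (q' = q ∧ B - r ≤ B' - r')) :
    nq' < nq ∨ (nq' = nq ∧ B - nr ≤ B' - nr') := by omega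

lemma arith_run (B B' q r q' r' nq nr : ℕ) (hBB' : B < B') (hr' : r' < B')
    (hst : (r + 1 < B ∧ nq = q ∧ nr = r + 1) ∨ (r + 1 = B ∧ nq = q + 1 ∧ nr = 0))
    (hinv : q' < q ∨ (q' = q ∧ B - r ≤ B' - r')) :
    q' < nq ∨ (q' = nq ∧ B - nr ≤ B' - r') := by omega

lemma arith_run' (B B' q r q' r' nq' nr' : ℕ) (hBB' : B < B') (hr : r < B)
    (hst' : (r' + 1 < B' ∧ nq' = q' ∧ nr' = r' + 1) ∨ (r' + 1 = B' ∧ nq' = q' + 1 ∧ nr' = 0))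
    (hstrict : q' < q) :
    nq' < q ∨ (nq' = q ∧ B - r ≤ B' - nr') := by omega

/-- If machine `i₀` raises its bid from `b i₀` to `b' i₀` (all other bids unchanged),
then at every time `t` every machine `k ≠ i₀` receives no more jobs among the first
`t` jobs under `b'` than under `b`. -/
theorem restricted_greedy_others_no_gain {n m : ℕ} (b b' : Fin n → ℕ)
    (π : Fin n → ℕ) (hπ : Function.Injective π)
    (Msets : Fin m → Finset (Fin n)) (i₀ : Fin n)
    (hb : ∀ i, 1 ≤ b i) (hagree : ∀ i, i ≠ i₀ → b' i = b i) (hincr : b i₀ < b' i₀)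
    (assign assign' : Fin m → Fin n)
    (hg : IsRestrictedGreedy b π Msets assign)
    (hg' : IsRestrictedGreedy b' π Msets assign') :
    ∀ t ≤ m, ∀ k : Fin n, k ≠ i₀ →
      greedyHeight m assign' t k ≤ greedyHeight m assign t k := by
  classical
  have hB0 : 0 < b i₀ := hb i₀
  have hB0' : 0 < b' i₀ := by omega
  suffices key : ∀ t, t ≤ m →
      ((∀ k, k ≠ i₀ → greedyHeight m assign' t k ≤ greedyHeight m assign t k) ∧
      ((greedyHeight m assign' t i₀ + 1) / b' i₀ < (greedyHeight m assign t i₀ + 1) / b i₀ ∨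
        ((greedyHeight m assign' t i₀ + 1) / b' i₀ = (greedyHeight m assign t i₀ + 1) / b i₀ ∧
          b i₀ - (greedyHeight m assign t i₀ + 1) % b i₀ ≤
            b' i₀ - (greedyHeight m assign' t i₀ + 1) % b' i₀))) by
    intro t ht k hk
    exact (key t ht).1 k hk
  intro t
  induction t with
  | zero =>
    intro _
    constructor
    · intro k _
      rw [gh_zero, gh_zero]
    · rw [gh_zero, gh_zero]
      rcases Nat.lt_or_ge 1 (b i₀) with hB | hB
      · have e1 : 1 / b i₀ = 0 := Nat.div_eq_of_lt hB
        have e2 : 1 / b' i₀ = 0 := Nat.div_eq_of_lt (by omega)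
        have e3 : 1 % b i₀ = 1 := Nat.mod_eq_of_lt hB
        have e4 : 1 % b' i₀ = 1 := Nat.mod_eq_of_lt (by omega)
        right
        refine ⟨by rw [e1, e2], by rw [e3, e4]; omega⟩
      · have hBe : b i₀ = 1 := le_antisymm hB (hb i₀)
        have e2 : 1 / b' i₀ = 0 := Nat.div_eq_of_lt (by omega)
        left
        rw [e2, hBe]
        norm_num
  | succ t IH =>
    intro ht1
    have ht : t < m := by omega
    obtain ⟨IH1, IH2⟩ := IH (by omega)
    obtain ⟨hM, hmin⟩ := hg ⟨t, ht⟩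
    obtain ⟨hM', hmin'⟩ := hg' ⟨t, ht⟩
    have Hmin : ∀ j ∈ Msets ⟨t, ht⟩, j ≠ assign ⟨t, ht⟩ →
        (greedyHeight m assign t (assign ⟨t, ht⟩) + 1) / b (assign ⟨t, ht⟩)
            < (greedyHeight m assign t j + 1) / b j ∨
        ((greedyHeight m assign t (assign ⟨t, ht⟩) + 1) / b (assign ⟨t, ht⟩)
            = (greedyHeight m assign t j + 1) / b j ∧ π (assign ⟨t, ht⟩) < π j) := hmin
    have Hmin' : ∀ j ∈ Msets ⟨t, ht⟩, j ≠ assign' ⟨t, ht⟩ →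
        (greedyHeight m assign' t (assign' ⟨t, ht⟩) + 1) / b' (assign' ⟨t, ht⟩)
            < (greedyHeight m assign' t j + 1) / b' j ∨
        ((greedyHeight m assign' t (assign' ⟨t, ht⟩) + 1) / b' (assign' ⟨t, ht⟩)
            = (greedyHeight m assign' t j + 1) / b' j ∧ π (assign' ⟨t, ht⟩) < π j) := hmin'
    have hcomp : ∀ j, (greedyHeight m assign' t j + 1) / b' j ≤
        (greedyHeight m assign t j + 1) / b j := by
      intro j
      by_cases hj : j = i₀
      · subst hj
        rcases IH2 with h | h
        · exact le_of_lt h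
        · exact le_of_eq h.1
      · rw [hagree j hj]
        exact Nat.div_le_div_right (by have := IH1 j hj; omega)
    constructor
    · -- heights of machines other than i₀ do not grow
      intro k hk
      rw [gh_succ assign ht k, gh_succ assign' ht k]
      by_cases h2 : assign' ⟨t, ht⟩ = k
      · by_cases h1 : assign ⟨t, ht⟩ = k
        · have := IH1 k hk
          rw [if_pos h1, if_pos h2]
          omega
        · rcases Nat.lt_or_ge (greedyHeight m assign' t k) (greedyHeight m assign t k) with
            hlt | hge
          · rw [if_pos h2, if_neg h1]
            omega
          · exfalso
            have heq : greedyHeight m assign' t k = greedyHeight m assign t k :=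
              le_antisymm (IH1 k hk) hge
            have hkM : k ∈ Msets ⟨t, ht⟩ := h2 ▸ hM'
            have hne1 : assign ⟨t, ht⟩ ≠ assign' ⟨t, ht⟩ := by rw [h2]; exact h1
            have d1 := Hmin' (assign ⟨t, ht⟩) hM hne1
            rw [h2] at d1
            have d2 := Hmin k hkM (fun hh => h1 hh.symm)
            have hAA : (greedyHeight m assign' t k + 1) / b' k =
                (greedyHeight m assign t k + 1) / b k := by
              rw [hagree k hk, heq]
            exact chain_absurd _ _ _ _ _ _ hAA d1 (hcomp (assign ⟨t, ht⟩)) d2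
      · have := IH1 k hk
        rw [if_neg h2]
        by_cases h1 : assign ⟨t, ht⟩ = k
        · rw [if_pos h1]; omega
        · rw [if_neg h1]; omega
    · -- invariant for i₀
      rw [gh_succ assign ht i₀, gh_succ assign' ht i₀]
      by_cases h1 : assign ⟨t, ht⟩ = i₀ <;> by_cases h2 : assign' ⟨t, ht⟩ = i₀
      · -- both place on i₀
        rw [if_pos h1, if_pos h2]
        exact arith_both (b i₀) (b' i₀) _ _ _ _ _ _ _ _ hincr
          (nat_step (greedyHeight m assign t i₀ + 1) (b i₀) hB0)
          (nat_step (greedyHeight m assign' t i₀ + 1) (b' i₀) hB0')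
          IH2
      · -- only the unprimed run places on i₀
        rw [if_pos h1, if_neg h2, Nat.add_zero]
        exact arith_run (b i₀) (b' i₀) _ _ _ _ _ _ hincr
          (Nat.mod_lt _ hB0')
          (nat_step (greedyHeight m assign t i₀ + 1) (b i₀) hB0)
          IH2
      · -- only the primed run places on i₀ : need strict comparison
        rw [if_neg h1, if_pos h2, Nat.add_zero]
        have hne1 : assign ⟨t, ht⟩ ≠ assign' ⟨t, ht⟩ := by rw [h2]; exact h1
        have d1 := Hmin' (assign ⟨t, ht⟩) hM hne1
        rw [h2] at d1
        have hi0M : i₀ ∈ Msets ⟨t, ht⟩ := h2 ▸ hM'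
        have d2 := Hmin i₀ hi0M (fun hh => h1 hh.symm)
        have hstrict : (greedyHeight m assign' t i₀ + 1) / b' i₀ <
            (greedyHeight m assign t i₀ + 1) / b i₀ :=
          chain_lt _ _ _ _ _ _ d1 (hcomp (assign ⟨t, ht⟩)) d2
        exact arith_run' (b i₀) (b' i₀) _ _ _ _ _ _ hincr
          (Nat.mod_lt _ hB0)
          (nat_step (greedyHeight m assign' t i₀ + 1) (b' i₀) hB0')
          hstrict
      · -- neither places on i₀
        rw [if_neg h1, if_neg h2, Nat.add_zero, Nat.add_zero]
        exact IH2
end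

section
/- Fix positive integers k and i. Consider the random bipartite graph on vertex set M ∪ W with |M| = |W| = n, where each man m ∈ M is independently assigned a uniformly random k-element subset of W, and the edges of the graph join each man to the k women in his subset. Then for all sufficiently large n, for every vertex v, the probability that the number of vertices at graph distance at most i from v exceeds (16k)^i · log₂ n is at most i/n³. -/
/-!
Explore the graph from `v` layer by layer, with budgets `a_j = (16k)^j ⌊log₂ n⌋`. Call level `j`
bad if at most `a_j` women lie within distance `j` of `v` while at least `t = 8k a_j` men lie at
distance `j + 1`. If no level below `i` is bad, then `|N_j(v)| ≤ a_j` for all `j ≤ i` by induction.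
A level is bad with probability at most `C(n,t) (a_j k / n)^t ≤ (a_j k)^t / t! ≤ 2^{-t} ≤ n^{-3}`:
fix the `t` men; with their edges deleted, the other men's choices already determine the women
within distance `j`, and each of the `t` random `k`-sets meets them with probability at most
`a_j k / n`. A union bound over the `i` levels gives `i / n³`.
-/

/-- The bipartite graph on `Fin n ⊕ Fin n` (men ⊕ women) in which man `a` is
adjacent to woman `b` iff `b ∈ f a`. -/
def bipGraph (n : ℕ) (f : Fin n → Finset (Fin n)) : SimpleGraph (Fin n ⊕ Fin n) where
  Adj u v :=
    (∃ a b, u = Sum.inl a ∧ v = Sum.inr b ∧ b ∈ f a) ∨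
    (∃ a b, u = Sum.inr b ∧ v = Sum.inl a ∧ b ∈ f a)
  symm := by
    constructor
    intro u v h
    rcases h with ⟨a, b, h1, h2, h3⟩ | ⟨a, b, h1, h2, h3⟩
    · exact Or.inr ⟨a, b, h2, h1, h3⟩
    · exact Or.inl ⟨a, b, h2, h1, h3⟩
  loopless := by
    constructor
    intro u h
    rcases h with ⟨a, b, h1, h2, _⟩ | ⟨a, b, h1, h2, _⟩ <;> subst h1 <;> simp_all


open Finset SimpleGraph Sum
open scoped Classical

section Counting

variable {ι κ : Type*} [Fintype ι] [Fintype κ]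

theorem card_filter_and_forall_mem_le [DecidableEq ι] [DecidableEq κ] (A : Finset ι)
    (P : (ι → κ) → Prop) [DecidablePred P] (T : (ι → κ) → Finset κ) (s : ℕ)
    (hT : ∀ f f' : ι → κ, (∀ a ∉ A, f a = f' a) → T f = T f') (hs : ∀ f, P f → #(T f) ≤ s) :
    #{f | P f ∧ ∀ a ∈ A, f a ∈ T f} ≤ Fintype.card κ ^ (Fintype.card ι - #A) * s ^ #A := by
  set E : Finset (ι → κ) := {f | P f ∧ ∀ a ∈ A, f a ∈ T f}
  let restrict : (ι → κ) → ({a // a ∉ A} → κ) := fun f a => f a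
  have hfiber : ∀ y ∈ E.image restrict, #{f ∈ E | restrict f = y} ≤ s ^ #A := by
    rintro _ hy
    obtain ⟨f₀, hf₀, rfl⟩ := mem_image.1 hy
    have hsub : {f ∈ E | restrict f = restrict f₀} ⊆
        Fintype.piFinset fun a => if a ∈ A then T f₀ else {f₀ a} := by
      intro f hf
      obtain ⟨hfE, hrf⟩ := mem_filter.1 hf
      have hoff : ∀ a ∉ A, f a = f₀ a := fun a ha => congrFun hrf ⟨a, ha⟩
      rw [Fintype.mem_piFinset]
      intro a
      split_ifs with ha
      · exact hT f f₀ hoff ▸ (mem_filter.1 hfE).2.2 a ha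
      · exact mem_singleton.2 (hoff a ha)
    calc #{f ∈ E | restrict f = restrict f₀}
        ≤ ∏ a, #(if a ∈ A then T f₀ else {f₀ a}) :=
          (card_le_card hsub).trans (Fintype.card_piFinset _).le
      _ = #(T f₀) ^ #A := by simp [apply_ite card, prod_ite_mem]
      _ ≤ s ^ #A := Nat.pow_le_pow_left (hs f₀ (mem_filter.1 hf₀).2.1) _
  calc #E ≤ s ^ #A * #(E.image restrict) := card_le_mul_card_image E _ hfiber
    _ ≤ s ^ #A * Fintype.card ({a // a ∉ A} → κ) := Nat.mul_le_mul_left _ (card_le_univ _)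
    _ = Fintype.card κ ^ (Fintype.card ι - #A) * s ^ #A := by
      rw [Fintype.card_fun, Fintype.card_subtype_compl, Fintype.card_coe, mul_comm]

variable {n k : ℕ}

theorem card_filter_mem_le_choose (hk : 0 < k) (b : Fin n) :
    #{x : {S : Finset (Fin n) // #S = k} | b ∈ x.1} ≤ (n - 1).choose (k - 1) := by
  calc #{x : {S : Finset (Fin n) // #S = k} | b ∈ x.1}
      ≤ #{S ∈ powersetCard k univ | {b} ⊆ S} :=
        card_le_card_of_injOn Subtype.val (fun x hx => by simpa [x.2] using (mem_filter.1 hx).2)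
          Subtype.val_injective.injOn
    _ = (n - 1).choose (k - 1) := by
        rw [card_filter_powersetCard_subset _ _ _ (subset_univ _)
          ((card_singleton b).trans_le hk)]
        simp

theorem card_filter_exists_mem_le (hk : 0 < k) (W : Finset (Fin n)) :
    #{x : {S : Finset (Fin n) // #S = k} | ∃ b ∈ W, b ∈ x.1} ≤ #W * (n - 1).choose (k - 1) := by
  calc #{x : {S : Finset (Fin n) // #S = k} | ∃ b ∈ W, b ∈ x.1}
      ≤ #(W.biUnion fun b => {x : {S : Finset (Fin n) // #S = k} | b ∈ x.1}) :=
        card_le_card fun x hx => by simpa using hx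
    _ ≤ #W * (n - 1).choose (k - 1) :=
        card_biUnion_le_card_mul _ _ _ fun b _ => card_filter_mem_le_choose hk b

end Counting

namespace SimpleGraph

variable {V : Type*} {G H : SimpleGraph V} {u v x y : V} {j : ℕ}

theorem edist_le_iff_reachable_and_dist_le :
    G.edist v u ≤ j ↔ G.Reachable v u ∧ G.dist v u ≤ j := by
  refine ⟨fun h => ?_, fun ⟨hr, hd⟩ => hr.coe_dist_eq_edist ▸ by exact_mod_cast hd⟩
  have hr := G.reachable_of_edist_ne_top (ne_top_of_le_ne_top (ENat.natCast_ne_top j) h)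
  exact ⟨hr, by exact_mod_cast hr.coe_dist_eq_edist ▸ h⟩

theorem Adj.edist_le_edist_add_one (h : G.Adj x y) : G.edist v y ≤ G.edist v x + 1 :=
  (G.edist_triangle).trans_eq (by rw [edist_eq_one_iff_adj.2 h])

theorem exists_adj_edist_le_of_edist_le_succ (h : G.edist v u ≤ j + 1) (hne : v ≠ u) :
    ∃ x, G.edist v x ≤ j ∧ G.Adj x u := by
  have hr := G.reachable_of_edist_ne_top (ne_top_of_le_ne_top (by simp) h)
  obtain ⟨p, hp⟩ := hr.exists_walk_length_eq_edist
  have hnil : ¬p.Nil := fun hn => hne hn.eq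
  refine ⟨p.penultimate, (edist_le p.dropLast).trans ?_, p.adj_penultimate hnil⟩
  rw [p.length_dropLast]
  have : p.length ≤ j + 1 := by exact_mod_cast hp ▸ h
  exact_mod_cast (by omega : p.length - 1 ≤ j)

/-- A shortest path from `v` of length at most `j` only leaves vertices at distance less than
`j`. -/
theorem edist_le_of_forall_adj_imp (hGH : ∀ x y, G.Adj x y → G.edist v x < j → H.Adj x y)
    (hu : G.edist v u ≤ j) : H.edist v u ≤ j := by
  induction j generalizing u with
  | zero => simp_all [edist_eq_zero_iff]
  | succ j ih =>
    by_cases hvu : v = u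
    · simp [hvu]
    obtain ⟨x, hx, hxu⟩ := exists_adj_edist_le_of_edist_le_succ (by exact_mod_cast hu) hvu
    have hHx := ih (fun x y hxy hx => hGH x y hxy (hx.trans (by norm_cast; omega))) hx
    have hHxu := hGH x u hxu (hx.trans_lt (by norm_cast; omega))
    calc H.edist v u ≤ H.edist v x + 1 := hHxu.edist_le_edist_add_one
      _ ≤ j + 1 := by gcongr
      _ = ((j + 1 : ℕ) : ℕ∞) := by norm_cast

variable [Fintype V]

noncomputable def nbhd (G : SimpleGraph V) (v : V) (j : ℕ) : Finset V := {u | G.edist v u ≤ j}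

noncomputable def sphere (G : SimpleGraph V) (v : V) (j : ℕ) : Finset V := {u | G.edist v u = j}

@[simp] theorem mem_nbhd : u ∈ G.nbhd v j ↔ G.edist v u ≤ j := by simp [nbhd]

@[simp] theorem mem_sphere : u ∈ G.sphere v j ↔ G.edist v u = j := by simp [sphere]

theorem nbhd_zero : G.nbhd v 0 = {v} := by
  ext u
  simp only [mem_nbhd, mem_singleton, Nat.cast_zero, nonpos_iff_eq_zero, edist_eq_zero_iff]
  exact eq_comm

theorem nbhd_succ : G.nbhd v (j + 1) = G.nbhd v j ∪ G.sphere v (j + 1) := by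
  ext u
  simp only [mem_nbhd, mem_sphere, mem_union]
  cases G.edist v u with
  | top => simpa using (ENat.natCast_ne_top (j + 1)).symm
  | coe d => norm_cast; omega

theorem nbhd_subset_nbhd_of_le (h : G ≤ H) : G.nbhd v j ⊆ H.nbhd v j := fun _ hu =>
  mem_nbhd.2 ((edist_anti h).trans (mem_nbhd.1 hu))

end SimpleGraph

section BipartiteNeighborhoods

variable {α β : Type*} [Fintype α] [Fintype β]

theorem card_toLeft_nbhd_succ_le (G : SimpleGraph (α ⊕ β)) (v : α ⊕ β) (j : ℕ) :
    #(G.nbhd v (j + 1)).toLeft ≤ #(G.nbhd v j).toLeft + #(G.sphere v (j + 1)).toLeft := by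
  calc #(G.nbhd v (j + 1)).toLeft ≤ #((G.nbhd v j).toLeft ∪ (G.sphere v (j + 1)).toLeft) :=
        card_le_card fun a ha => by simpa [nbhd_succ] using ha
    _ ≤ #(G.nbhd v j).toLeft + #(G.sphere v (j + 1)).toLeft := card_union_le _ _

def IsBadLevel (G : SimpleGraph (α ⊕ β)) (v : α ⊕ β) (j s t : ℕ) : Prop :=
  #(G.nbhd v j).toRight ≤ s ∧ t ≤ #(G.sphere v (j + 1)).toLeft

end BipartiteNeighborhoods

section bipGraph

variable {n k j : ℕ} {g g' : Fin n → Finset (Fin n)} {A : Finset (Fin n)} {a b : Fin n}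
  {v : Fin n ⊕ Fin n}

@[simp] theorem bipGraph_adj_inl_inr : (bipGraph n g).Adj (inl a) (inr b) ↔ b ∈ g a := by
  simp [bipGraph]

@[simp] theorem bipGraph_adj_inr_inl : (bipGraph n g).Adj (inr b) (inl a) ↔ b ∈ g a := by
  simp [bipGraph]

@[simp] theorem not_bipGraph_adj_inl_inl {a' : Fin n} :
    ¬(bipGraph n g).Adj (inl a) (inl a') := by
  simp [bipGraph]

@[simp] theorem not_bipGraph_adj_inr_inr {b' : Fin n} :
    ¬(bipGraph n g).Adj (inr b) (inr b') := by
  simp [bipGraph]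

theorem bipGraph_mono (h : ∀ a, g a ⊆ g' a) : bipGraph n g ≤ bipGraph n g' := by
  rintro (a | b) (a' | b') hadj <;> simp_all
  · exact h a hadj
  · exact h a' hadj

theorem card_toRight_nbhd_succ_le (hg : ∀ a, #(g a) ≤ k) (v : Fin n ⊕ Fin n) (j : ℕ) :
    #((bipGraph n g).nbhd v (j + 1)).toRight ≤ 1 + k * #((bipGraph n g).nbhd v j).toLeft := by
  have hsub : ((bipGraph n g).nbhd v (j + 1)).toRight ⊆
      ({v} : Finset _).toRight ∪ ((bipGraph n g).nbhd v j).toLeft.biUnion g := by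
    intro b hb
    rw [mem_toRight, mem_nbhd] at hb
    by_cases hv : v = inr b
    · simp [hv]
    obtain ⟨a | b', hx, hadj⟩ := exists_adj_edist_le_of_edist_le_succ hb hv
    · exact mem_union_right _ (mem_biUnion.2 ⟨a, by simpa using hx, by simpa using hadj⟩)
    · simp at hadj
  calc #((bipGraph n g).nbhd v (j + 1)).toRight
      ≤ #({v} : Finset _).toRight + #(((bipGraph n g).nbhd v j).toLeft.biUnion g) :=
        (card_le_card hsub).trans (card_union_le _ _)
    _ ≤ 1 + k * #((bipGraph n g).nbhd v j).toLeft := by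
        gcongr
        · exact card_toRight_le.trans (card_singleton v).le
        · rw [mul_comm]
          exact card_biUnion_le_card_mul _ _ _ fun a _ => hg a

/-- With `a_j = (16k)^j ℓ`, a level that is not bad adds at most `1 + k a_j` women and fewer
than `8 k a_j` men, so the budget `a_j` of `N_j(v)` grows by the factor `16k`. -/
theorem card_nbhd_le_of_forall_not_isBadLevel (hk : 0 < k) (hg : ∀ a, #(g a) ≤ k) {ℓ : ℕ}
    (hℓ : 1 ≤ ℓ) {i : ℕ}
    (hgood : ∀ j < i, ¬IsBadLevel (bipGraph n g) v j ((16 * k) ^ j * ℓ)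
      (8 * k * ((16 * k) ^ j * ℓ))) :
    #((bipGraph n g).nbhd v i) ≤ (16 * k) ^ i * ℓ := by
  rw [← card_toLeft_add_card_toRight]
  induction i with
  | zero => rwa [card_toLeft_add_card_toRight, nbhd_zero, card_singleton, pow_zero, one_mul]
  | succ j ih =>
    set a := (16 * k) ^ j * ℓ
    have hj := ih fun j' hj' => hgood j' (by omega)
    have hsphere : #((bipGraph n g).sphere v (j + 1)).toLeft < 8 * k * a := by
      have := hgood j (by omega)
      simp only [IsBadLevel, not_and, not_le] at this
      exact this (by omega)
    have hmen := card_toLeft_nbhd_succ_le (bipGraph n g) v j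
    have hwomen := card_toRight_nbhd_succ_le hg v j
    have hkM : k * #((bipGraph n g).nbhd v j).toLeft ≤ k * a := Nat.mul_le_mul_left k (by omega)
    have hka : a ≤ k * a := Nat.le_mul_of_pos_left a hk
    have hnext : (16 * k) ^ (j + 1) * ℓ = 16 * (k * a) := by ring
    rw [hnext]
    have h8 : 8 * k * a = 8 * (k * a) := by ring
    omega

theorem bipGraph_piecewise_empty_le : bipGraph n (A.piecewise (fun _ => ∅) g) ≤ bipGraph n g :=
  bipGraph_mono fun a => by by_cases ha : a ∈ A <;> simp [ha]

/-- No path of length at most `j` from `v` passes through a man at distance `j + 1`, so deleting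
the edges of such men keeps the women within distance `j`. -/
theorem exists_mem_toRight_nbhd_piecewise_empty
    (hA : A ⊆ ((bipGraph n g).sphere v (j + 1)).toLeft) {a : Fin n} (ha : a ∈ A) :
    ∃ b ∈ g a, b ∈ ((bipGraph n (A.piecewise (fun _ => ∅) g)).nbhd v j).toRight := by
  have hdist : ∀ a ∈ A, (bipGraph n g).edist v (inl a) = j + 1 := fun a ha => by
    simpa using hA ha
  have hne : v ≠ inl a := fun h => by
    have := hdist a ha
    rw [← h, edist_self] at this
    exact Nat.cast_add_one_ne_zero j this.symm
  obtain ⟨x, hx, hxa⟩ := exists_adj_edist_le_of_edist_le_succ (hdist a ha).le hne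
  obtain ⟨b, rfl⟩ : ∃ b, x = inr b := by
    cases x with
    | inl a' => simp at hxa
    | inr b => exact ⟨b, rfl⟩
  refine ⟨b, by simpa using hxa, mem_toRight.2 (mem_nbhd.2 (edist_le_of_forall_adj_imp ?_ hx))⟩
  rintro (a' | b') (a'' | b'') hadj hlt <;>
    simp only [bipGraph_adj_inl_inr, bipGraph_adj_inr_inl, not_bipGraph_adj_inl_inl,
      not_bipGraph_adj_inr_inr] at hadj ⊢
  · have ha' : a' ∉ A := fun h => (hdist a' h ▸ hlt).not_ge le_self_add
    simpa [ha'] using hadj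
  · have ha'' : a'' ∉ A := fun h => by
      have hle := (bipGraph_adj_inr_inl.2 hadj).edist_le_edist_add_one (v := v)
      rw [hdist a'' h, ENat.add_one_le_iff (ENat.natCast_ne_top j)] at hle
      exact absurd ((ENat.add_one_le_iff' (ENat.natCast_ne_top j)).2 hlt) (not_le.2 hle)
    simpa [ha''] using hadj

end bipGraph

section Arithmetic

open Nat in
theorem Nat.pow_le_factorial_of_four_mul_le {m t : ℕ} (h : 4 * m ≤ t) : m ^ t ≤ t ! := by
  have hexp : (t : ℝ) ^ t ≤ 4 ^ t * t ! := by
    have h1 := Real.pow_div_factorial_le_exp _ (Nat.cast_nonneg t) t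
    rw [div_le_iff₀ (by positivity)] at h1
    calc (t : ℝ) ^ t ≤ Real.exp t * t ! := h1
      _ = Real.exp 1 ^ t * t ! := by rw [← Real.exp_nat_mul, mul_one]
      _ ≤ 4 ^ t * t ! := by
          gcongr
          linarith [Real.exp_one_lt_d9]
  have hm : ((4 * m : ℕ) : ℝ) ^ t ≤ (t : ℝ) ^ t := by gcongr
  have : ((4 : ℝ) ^ t) * (m : ℝ) ^ t ≤ 4 ^ t * t ! := by
    rw [← mul_pow]; push_cast at hm; linarith
  exact_mod_cast le_of_mul_le_mul_left this (by positivity)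

theorem Nat.pow_three_le_two_pow_eight_mul_log (n : ℕ) : n ^ 3 ≤ 2 ^ (8 * Nat.log 2 n) := by
  rcases Nat.eq_zero_or_pos (Nat.log 2 n) with h | h
  · have : n < 2 := by simpa [h] using Nat.lt_pow_succ_log_self one_lt_two n
    interval_cases n <;> simp
  · calc n ^ 3 ≤ (2 ^ (Nat.log 2 n + 1)) ^ 3 :=
          Nat.pow_le_pow_left (Nat.lt_pow_succ_log_self one_lt_two n).le 3
      _ ≤ 2 ^ (8 * Nat.log 2 n) := by
          rw [← pow_mul]
          exact Nat.pow_le_pow_right two_pos (by omega)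

open Nat in
/-- Divided by `C(n,k)^n`, the left side is `C(n,t) (s k / n)^t 2^t ≤ (2 s k)^t / t!`, at most `1`
for `t = 8 k s`. -/
theorem Nat.choose_mul_pow_mul_two_pow_le {n k s : ℕ} (hn : 0 < n) (hk : 0 < k) :
    n.choose (8 * k * s) *
        (n.choose k ^ (n - 8 * k * s) * (s * (n - 1).choose (k - 1)) ^ (8 * k * s)) *
      2 ^ (8 * k * s) ≤ n.choose k ^ n := by
  set t := 8 * k * s
  rcases lt_or_ge n t with hnt | htn
  · simp [Nat.choose_eq_zero_of_lt hnt]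
  have hpascal : n * (n - 1).choose (k - 1) = k * n.choose k := by
    have := Nat.add_one_mul_choose_eq (n - 1) (k - 1)
    rwa [Nat.sub_add_cancel hn, Nat.sub_add_cancel hk, mul_comm (n.choose k)] at this
  have hfact : (2 * s * k) ^ t ≤ t ! :=
    Nat.pow_le_factorial_of_four_mul_le (le_of_eq (by simp only [t]; ring))
  have hchoose : n.choose t * t ! ≤ n ^ t := by
    rw [mul_comm, ← Nat.descFactorial_eq_factorial_mul_choose]
    exact Nat.descFactorial_le_pow n t
  have hcore : n.choose t * (s * (n - 1).choose (k - 1)) ^ t * 2 ^ t ≤ n.choose k ^ t := by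
    refine Nat.le_of_mul_le_mul_left ?_ (pow_pos hn t)
    calc n ^ t * (n.choose t * (s * (n - 1).choose (k - 1)) ^ t * 2 ^ t)
        = n.choose t * (2 * s * (n * (n - 1).choose (k - 1))) ^ t := by ring
      _ = n.choose t * (2 * s * k) ^ t * n.choose k ^ t := by rw [hpascal]; ring
      _ ≤ n.choose t * t ! * n.choose k ^ t := by gcongr
      _ ≤ n ^ t * n.choose k ^ t := by gcongr
  calc n.choose t * (n.choose k ^ (n - t) * (s * (n - 1).choose (k - 1)) ^ t) * 2 ^ t
      = n.choose k ^ (n - t) * (n.choose t * (s * (n - 1).choose (k - 1)) ^ t * 2 ^ t) := by ring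
    _ ≤ n.choose k ^ (n - t) * n.choose k ^ t := Nat.mul_le_mul_left _ hcore
    _ = n.choose k ^ n := by rw [← pow_add, Nat.sub_add_cancel htn]

end Arithmetic

section BadLevelCount

variable {n k : ℕ}

theorem card_isBadLevel_le (hk : 0 < k) (v : Fin n ⊕ Fin n) (j s t : ℕ) :
    #{f : Fin n → {S : Finset (Fin n) // #S = k} |
        IsBadLevel (bipGraph n fun a => (f a).1) v j s t} ≤
      n.choose t * (n.choose k ^ (n - t) * (s * (n - 1).choose (k - 1)) ^ t) := by
  set W : Finset (Fin n) → (Fin n → {S : Finset (Fin n) // #S = k}) → Finset (Fin n) :=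
    fun A f => ((bipGraph n (A.piecewise (fun _ => ∅) fun a => (f a).1)).nbhd v j).toRight
  set E : Finset (Fin n) → Finset (Fin n → {S : Finset (Fin n) // #S = k}) := fun A =>
    {f | #(W A f) ≤ s ∧ ∀ a ∈ A, f a ∈ ({x | ∃ b ∈ W A f, b ∈ x.1} : Finset _)}
  have hsub : ({f : Fin n → {S : Finset (Fin n) // #S = k} |
      IsBadLevel (bipGraph n fun a => (f a).1) v j s t} : Finset _) ⊆
      (powersetCard t univ).biUnion E := by
    intro f hf
    obtain ⟨hW, hX⟩ := (mem_filter.1 hf).2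
    obtain ⟨A, hA, hAt⟩ := exists_subset_card_eq hX
    refine mem_biUnion.2 ⟨A, mem_powersetCard_univ.2 hAt, mem_filter.2 ⟨mem_univ _, ?_, ?_⟩⟩
    · exact (card_le_card (toRight_subset_toRight
        (nbhd_subset_nbhd_of_le bipGraph_piecewise_empty_le))).trans hW
    · intro a ha
      obtain ⟨b, hb, hbW⟩ := exists_mem_toRight_nbhd_piecewise_empty hA ha
      exact mem_filter.2 ⟨mem_univ _, b, hbW, hb⟩
  have hE : ∀ A ∈ powersetCard t univ,
      #(E A) ≤ n.choose k ^ (n - t) * (s * (n - 1).choose (k - 1)) ^ t := by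
    intro A hA
    have hW : ∀ f f' : Fin n → {S : Finset (Fin n) // #S = k},
        (∀ a ∉ A, f a = f' a) → W A f = W A f' := fun f f' h => by
      simp only [W]
      congr 3
      ext a : 1
      by_cases ha : a ∈ A <;> simp [ha, h]
    calc #(E A) ≤ Fintype.card {S : Finset (Fin n) // #S = k} ^ (Fintype.card (Fin n) - #A) *
          (s * (n - 1).choose (k - 1)) ^ #A := by
          convert card_filter_and_forall_mem_le A (fun f => #(W A f) ≤ s)
            (fun f => {x | ∃ b ∈ W A f, b ∈ x.1}) _ (fun f f' h => by rw [hW f f' h])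
            fun f hf => (card_filter_exists_mem_le hk _).trans (Nat.mul_le_mul_right _ hf)
      _ = n.choose k ^ (n - t) * (s * (n - 1).choose (k - 1)) ^ t := by
          rw [Fintype.card_finset_len, Fintype.card_fin, mem_powersetCard_univ.1 hA]
  calc _ ≤ #((powersetCard t univ).biUnion E) := card_le_card hsub
    _ ≤ #(powersetCard t (univ : Finset (Fin n))) *
          (n.choose k ^ (n - t) * (s * (n - 1).choose (k - 1)) ^ t) :=
        card_biUnion_le_card_mul _ _ _ hE
    _ = n.choose t * (n.choose k ^ (n - t) * (s * (n - 1).choose (k - 1)) ^ t) := by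
        rw [card_powersetCard, card_univ, Fintype.card_fin]

theorem card_isBadLevel_mul_two_pow_le (hk : 0 < k) (v : Fin n ⊕ Fin n) (j s : ℕ) :
    #{f : Fin n → {S : Finset (Fin n) // #S = k} |
        IsBadLevel (bipGraph n fun a => (f a).1) v j s (8 * k * s)} * 2 ^ (8 * k * s) ≤
      Fintype.card (Fin n → {S : Finset (Fin n) // #S = k}) := by
  rw [Fintype.card_fun, Fintype.card_finset_len, Fintype.card_fin]
  exact (Nat.mul_le_mul_right _ (card_isBadLevel_le hk v j s _)).trans
    (Nat.choose_mul_pow_mul_two_pow_le (v.elim Fin.pos Fin.pos) hk)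

theorem card_filter_lt_card_nbhd_mul_pow_three_le (hk : 0 < k) (hn : 2 ≤ n) (v : Fin n ⊕ Fin n)
    (i : ℕ) :
    #{f : Fin n → {S : Finset (Fin n) // #S = k} |
        (16 * k) ^ i * Nat.log 2 n < #((bipGraph n fun a => (f a).1).nbhd v i)} * n ^ 3 ≤
      i * Fintype.card (Fin n → {S : Finset (Fin n) // #S = k}) := by
  set ℓ := Nat.log 2 n
  set bad : ℕ → Finset (Fin n → {S : Finset (Fin n) // #S = k}) := fun j =>
    {f | IsBadLevel (bipGraph n fun a => (f a).1) v j ((16 * k) ^ j * ℓ)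
      (8 * k * ((16 * k) ^ j * ℓ))}
  have hsub : ({f : Fin n → {S : Finset (Fin n) // #S = k} |
      (16 * k) ^ i * ℓ < #((bipGraph n fun a => (f a).1).nbhd v i)} : Finset _) ⊆
      (range i).biUnion bad := by
    intro f hf
    by_contra hbad
    simp only [bad, mem_biUnion, mem_range, mem_filter, mem_univ, true_and, not_exists,
      not_and] at hbad
    exact (mem_filter.1 hf).2.not_ge (card_nbhd_le_of_forall_not_isBadLevel hk
      (fun a => (f a).2.le) (Nat.log_pos one_lt_two hn) hbad)
  have hbad : ∀ j, #(bad j) * n ^ 3 ≤ Fintype.card (Fin n → {S : Finset (Fin n) // #S = k}) := by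
    intro j
    have hℓ : 8 * ℓ ≤ 8 * k * ((16 * k) ^ j * ℓ) := by
      have : 1 ≤ k * (16 * k) ^ j := Nat.one_le_iff_ne_zero.2 (by positivity)
      nlinarith
    exact (Nat.mul_le_mul_left _ ((Nat.pow_three_le_two_pow_eight_mul_log n).trans
      (Nat.pow_le_pow_right two_pos hℓ))).trans (card_isBadLevel_mul_two_pow_le hk v j _)
  calc _ ≤ (∑ j ∈ range i, #(bad j)) * n ^ 3 :=
        Nat.mul_le_mul_right _ ((card_le_card hsub).trans card_biUnion_le)
    _ ≤ ∑ _j ∈ range i, Fintype.card (Fin n → {S : Finset (Fin n) // #S = k}) := by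
        rw [sum_mul]
        exact sum_le_sum fun j _ => hbad j
    _ = i * Fintype.card (Fin n → {S : Finset (Fin n) // #S = k}) := by simp

end BadLevelCount

open Classical in
theorem neighborhood_size_bound_general (k i : ℕ) (hk : 0 < k) :
    ∃ N₀ : ℕ, ∀ n : ℕ, N₀ ≤ n → ∀ v : Fin n ⊕ Fin n,
      ((Finset.univ.filter (fun f : Fin n → {S : Finset (Fin n) // S.card = k} =>
          ((16 * k : ℝ)) ^ i * Real.logb 2 n <
            ((Finset.univ.filter (fun u : Fin n ⊕ Fin n =>
                (bipGraph n (fun a => (f a).1)).Reachable v u ∧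
                (bipGraph n (fun a => (f a).1)).dist v u ≤ i)).card : ℝ))).card : ℝ)
        / (Fintype.card (Fin n → {S : Finset (Fin n) // S.card = k}) : ℝ)
      ≤ (i : ℝ) / (n : ℝ) ^ 3 := by
  refine ⟨2, fun n hn v => ?_⟩
  have hlog : (((16 * k) ^ i * Nat.log 2 n : ℕ) : ℝ) ≤ (16 * k : ℝ) ^ i * Real.logb 2 n := by
    push_cast
    gcongr
    exact Real.natLog_le_logb n 2
  have hevent := card_le_card (s := {f : Fin n → {S : Finset (Fin n) // #S = k} |
      (16 * k : ℝ) ^ i * Real.logb 2 n < #{u | (bipGraph n fun a => (f a).1).Reachable v u ∧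
        (bipGraph n fun a => (f a).1).dist v u ≤ i}})
    (t := {f | (16 * k) ^ i * Nat.log 2 n < #((bipGraph n fun a => (f a).1).nbhd v i)})
    fun f hf => by
      simp only [mem_filter, mem_univ, true_and, ← edist_le_iff_reachable_and_dist_le] at hf ⊢
      exact_mod_cast hlog.trans_lt hf
  rcases Nat.eq_zero_or_pos (Fintype.card (Fin n → {S : Finset (Fin n) // #S = k})) with h0 | hpos
  · rw [h0, Nat.cast_zero, div_zero]
    positivity
  rw [div_le_div_iff₀ (by exact_mod_cast hpos) (by positivity)]
  exact_mod_cast (Nat.mul_le_mul_right _ hevent).trans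
    (card_filter_lt_card_nbhd_mul_pow_three_le hk hn v i)

open Classical in
/-- In the random bipartite graph where each of the `n` men independently picks a
uniformly random `k`-element set of the `n` women, for fixed `k, i ≥ 1` and all
sufficiently large `n`, the probability that some fixed vertex `v` has more than
`(16k)^i · log₂ n` vertices within graph distance `i` is at most `i/n³`. -/
theorem neighborhood_size_bound (k i : ℕ) (hk : 0 < k) (hi : 0 < i) :
    ∃ N₀ : ℕ, ∀ n : ℕ, N₀ ≤ n → ∀ v : Fin n ⊕ Fin n,
      ((Finset.univ.filter (fun f : Fin n → {S : Finset (Fin n) // S.card = k} =>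
          ((16 * k : ℝ)) ^ i * Real.logb 2 n <
            ((Finset.univ.filter (fun u : Fin n ⊕ Fin n =>
                (bipGraph n (fun a => (f a).1)).Reachable v u ∧
                (bipGraph n (fun a => (f a).1)).dist v u ≤ i)).card : ℝ))).card : ℝ)
        / (Fintype.card (Fin n → {S : Finset (Fin n) // S.card = k}) : ℝ)
      ≤ (i : ℝ) / (n : ℝ) ^ 3 :=
  neighborhood_size_bound_general k i hk
end

section
/- Fix an integer t ≥ 1. Consider the following random process with n men and n women: in each of t rounds, every currently unmatched man independently picks a woman uniformly at random from all n women; every currently unmatched woman who is picked by at least one unmatched man becomes matched to one of these men, and all other men who picked her, as well as all men who picked an already-matched woman, remain unmatched. Let X^t be the number of women still unmatched after t rounds. Then for all sufficiently large n, Pr[X^t > 2n/t] ≤ t/n³. -/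
/-!
A woman still unmatched after round `j` stays unmatched in round `j + 1` exactly when none of
the `X_j` unmatched men proposes to her (every matched woman takes exactly one man, so `X_j`
counts unmatched men and women alike). Instead of Azuma's inequality we use the `r`-th binomial
moment of the number `Y` of such women: every `r`-set of them is avoided with probability
`(1 - r/n)^{X_j}`, so `E[C(Y, r)] = C(X_j, r) (1 - r/n)^{X_j}` and Markov's inequality gives
`P(Y ≥ a) ≤ (X_j e^{-X_j/n} / (a - r))^r`. For `a` the least integer above `2n/(j+1)` and
`X_j ≤ 2n/j`, the elementary bound `e^{-2x} ≤ (1 - x)(1 - x/5)` (with `x = 1/(j+1)`) makes the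
ratio at most `1 - 1/(10t)` as long as `r ≤ n/(5t²)`, and `r = ⌈30 t log n⌉` then makes the
probability at most `n⁻³`; such an `r` exists for large `n` because `log n = o(n)`.

If more than `2n/t` women are unmatched after `t` rounds, then, since `X_1 ≤ n`, some round
`j < t` crosses from `X_j ≤ 2n/j` to `X_{j+1} > 2n/(j+1)`. Fixing the choices of all rounds
but `j`, each crossing has probability at most `n⁻³`; a union bound over `j` gives `t/n³`.
-/

/-- The set of currently unmatched men in `um` who propose to woman `w`
under the round's choice function `c`. -/
def proposersTo (n : ℕ) (um : Finset (Fin n)) (c : Fin n → Fin n) (w : Fin n) :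
    Finset (Fin n) :=
  um.filter (fun m => c m = w)

/-- One round of the proposal process: every unmatched man in `st.1` proposes to
the woman `c m`; every unmatched woman (in `st.2`) who receives at least one
proposal becomes matched to the proposer selected by `pick`, and is removed from
the unmatched women; the selected men are removed from the unmatched men. -/
def proposalStep (n : ℕ) (pick : Finset (Fin n) → Fin n) (c : Fin n → Fin n)
    (st : Finset (Fin n) × Finset (Fin n)) : Finset (Fin n) × Finset (Fin n) :=
  (st.1 \ (st.2.filter (fun w => (proposersTo n st.1 c w).Nonempty)).image
      (fun w => pick (proposersTo n st.1 c w)),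
   st.2.filter (fun w => ¬ (proposersTo n st.1 c w).Nonempty))

/-- The state `(unmatched men, unmatched women)` after `r` rounds of the proposal
process, starting from everyone unmatched, with round-`j` choices `c j`. -/
def proposalState (n : ℕ) (pick : Finset (Fin n) → Fin n) (c : ℕ → Fin n → Fin n) :
    ℕ → Finset (Fin n) × Finset (Fin n)
  | 0 => (Finset.univ, Finset.univ)
  | r + 1 => proposalStep n pick (c r) (proposalState n pick c r)

open Finset Real Filter

theorem exists_mem_Ico_and_not_succ {P : ℕ → Prop} {a b : ℕ} (hab : a ≤ b) (ha : P a)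
    (hb : ¬P b) :
    ∃ j ∈ Ico a b, P j ∧ ¬P (j + 1) := by
  induction b, hab using Nat.le_induction with
  | base => exact absurd ha hb
  | succ b hab ih =>
    by_cases hPb : P b
    · exact ⟨b, mem_Ico.2 ⟨hab, lt_add_one b⟩, hPb, hb⟩
    · obtain ⟨j, hj, hPj⟩ := ih hPb
      exact ⟨j, Ico_subset_Ico_right (Nat.le_succ b) hj, hPj⟩

theorem card_le_mul_card_of_card_update_le {ι G : Type*} [Fintype ι] [DecidableEq ι] [Fintype G]
    [DecidableEq G] (i₀ : ι) (S : Finset (ι → G)) {p : ℝ}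
    (hS : ∀ c : ι → G, (#{g | Function.update c i₀ g ∈ S} : ℝ) ≤ p * Fintype.card G) :
    (#S : ℝ) ≤ p * Fintype.card (ι → G) := by
  set H := {i // i ≠ i₀} → G
  let rest : (ι → G) → H := fun c i => c i
  have hfiber : ∀ h : H, (#{c ∈ S | rest c = h} : ℝ) ≤ p * Fintype.card G := by
    intro h
    obtain hempty | ⟨c₀, hc₀⟩ := ({c ∈ S | rest c = h}).eq_empty_or_nonempty
    · rw [hempty, card_empty, Nat.cast_zero]
      obtain hG | hG := isEmpty_or_nonempty G
      · simp
      · exact (Nat.cast_nonneg _).trans (hS (fun _ => Classical.arbitrary G))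
    have hrepr :
        ∀ c ∈ ({c ∈ S | rest c = h} : Finset _), Function.update c₀ i₀ (c i₀) = c := by
      intro c hc
      funext i
      by_cases hi : i = i₀
      · subst hi; simp
      · rw [Function.update_of_ne hi]
        exact congrFun ((mem_filter.1 hc₀).2.trans (mem_filter.1 hc).2.symm) ⟨i, hi⟩
    refine le_trans ?_ (hS c₀)
    gcongr
    refine card_le_card_of_injOn (fun c => c i₀) (fun c hc => ?_) fun c₁ h₁ c₂ h₂ he => ?_
    · simpa [hrepr c hc] using (mem_filter.1 hc).1
    · rw [← hrepr c₁ h₁, ← hrepr c₂ h₂]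
      exact congrArg _ he
  have hcard : Fintype.card (ι → G) = Fintype.card H * Fintype.card G := by
    rw [Fintype.card_congr (Equiv.piSplitAt i₀ fun _ => G), Fintype.card_prod, mul_comm]
  calc (#S : ℝ) = ∑ h : H, (#{c ∈ S | rest c = h} : ℝ) := by
        exact_mod_cast card_eq_sum_card_fiberwise fun c _ => mem_univ (rest c)
    _ ≤ ∑ _h : H, p * Fintype.card G := sum_le_sum fun h _ => hfiber h
    _ = p * Fintype.card (ι → G) := by rw [sum_const, card_univ, hcard]; push_cast; ring

theorem Nat.choose_mul_sub_pow_le (m a r : ℕ) :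
    m.choose r * (a - r) ^ r ≤ a.choose r * m ^ r := by
  have hdesc : m.descFactorial r * (a - r) ^ r ≤ a.descFactorial r * m ^ r := by
    rw [mul_comm (a.descFactorial r)]
    refine Nat.mul_le_mul (Nat.descFactorial_le_pow m r) ((Nat.pow_le_pow_left ?_ r).trans
      (Nat.pow_sub_le_descFactorial a r))
    omega
  rw [Nat.descFactorial_eq_factorial_mul_choose, Nat.descFactorial_eq_factorial_mul_choose,
    mul_assoc, mul_assoc] at hdesc
  exact Nat.le_of_mul_le_mul_left hdesc r.factorial_pos

def unproposed {α β : Type*} [DecidableEq β] (A : Finset α) (B : Finset β) (g : α → β) :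
    Finset β :=
  {w ∈ B | ∀ m ∈ A, g m ≠ w}

theorem card_unproposed_le {α β : Type*} [DecidableEq β] (A : Finset α) (B : Finset β)
    (g : α → β) : #(unproposed A B g) ≤ #B :=
  card_filter_le _ _

section Moments

variable {α β : Type*} [Fintype α] [DecidableEq α] [Fintype β] [DecidableEq β]

theorem card_forall_mem_notMem (A : Finset α) (W : Finset β) :
    #{g : α → β | ∀ m ∈ A, g m ∉ W} =
      (Fintype.card β - #W) ^ #A * Fintype.card β ^ (Fintype.card α - #A) := by
  have hpi : ({g : α → β | ∀ m ∈ A, g m ∉ W} : Finset _) =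
      Fintype.piFinset (fun m => if m ∈ A then Wᶜ else univ) := by
    ext g
    simp only [mem_filter, mem_univ, true_and, Fintype.mem_piFinset]
    refine forall_congr' fun m => ?_
    split_ifs <;> simp [*]
  have hcompl : #{m | m ∉ A} = Fintype.card α - #A := by
    rw [← card_compl]; congr 1; ext; simp
  rw [hpi, Fintype.card_piFinset]
  simp [apply_ite card, prod_ite, card_compl, hcompl]

theorem sum_choose_card_unproposed (A : Finset α) (B : Finset β) (r : ℕ) :
    ∑ g : α → β, (#(unproposed A B g)).choose r =
      (#B).choose r * ((Fintype.card β - r) ^ #A * Fintype.card β ^ (Fintype.card α - #A)) := by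
  have hsubsets : ∀ g : α → β, (#(unproposed A B g)).choose r =
      #{W ∈ B.powersetCard r | ∀ m ∈ A, g m ∉ W} := by
    intro g
    rw [← card_powersetCard]
    congr 1
    ext W
    simp only [unproposed, mem_powersetCard, mem_filter, subset_iff]
    grind
  simp_rw [hsubsets, card_filter, sum_comm (γ := α → β), ← card_filter,
    card_forall_mem_notMem]
  rw [sum_congr rfl fun W hW => by rw [(mem_powersetCard.1 hW).2], sum_const, card_powersetCard,
    smul_eq_mul]

theorem card_le_card_unproposed_mul_choose_le (A : Finset α) (B : Finset β) (a r : ℕ) :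
    #{g : α → β | a ≤ #(unproposed A B g)} * a.choose r ≤
      (#B).choose r * ((Fintype.card β - r) ^ #A * Fintype.card β ^ (Fintype.card α - #A)) := by
  rw [← sum_choose_card_unproposed, ← smul_eq_mul]
  calc _ ≤ ∑ g ∈ {g : α → β | a ≤ #(unproposed A B g)},
          (#(unproposed A B g)).choose r :=
        card_nsmul_le_sum _ _ _ fun g hg => Nat.choose_le_choose r (mem_filter.1 hg).2
    _ ≤ _ := sum_le_sum_of_subset (subset_univ _)

theorem card_le_card_unproposed_mul_sub_pow_le (A : Finset α) (B : Finset β) (a r : ℕ) :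
    #{g : α → β | a ≤ #(unproposed A B g)} * (a - r) ^ r ≤
      #B ^ r * ((Fintype.card β - r) ^ #A * Fintype.card β ^ (Fintype.card α - #A)) := by
  set N := #{g : α → β | a ≤ #(unproposed A B g)}
  set Q := (Fintype.card β - r) ^ #A * Fintype.card β ^ (Fintype.card α - #A)
  obtain hra | har := le_or_gt r a
  · refine Nat.le_of_mul_le_mul_left ?_ (Nat.choose_pos hra)
    calc a.choose r * (N * (a - r) ^ r) = N * a.choose r * (a - r) ^ r := by ring
      _ ≤ (#B).choose r * Q * (a - r) ^ r :=
          Nat.mul_le_mul_right _ (card_le_card_unproposed_mul_choose_le A B a r)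
      _ = (#B).choose r * (a - r) ^ r * Q := by ring
      _ ≤ a.choose r * #B ^ r * Q := Nat.mul_le_mul_right _ (Nat.choose_mul_sub_pow_le _ _ _)
      _ = a.choose r * (#B ^ r * Q) := by ring
  · simp [Nat.sub_eq_zero_of_le har.le, zero_pow (Nat.ne_zero_of_lt har)]

end Moments

theorem Real.exp_neg_two_mul_le {x : ℝ} (hx₀ : 0 ≤ x) (hx : x ≤ 1 / 2) :
    exp (-(2 * x)) ≤ (1 - x) * (1 - x / 5) := by
  have hsq : (1 + x) ^ 2 ≤ exp (2 * x) := by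
    rw [show 2 * x = x + x by ring, exp_add, sq]
    have := add_one_le_exp x
    gcongr <;> linarith
  rw [exp_neg, inv_le_iff_one_le_mul₀ (exp_pos _)]
  have hx' : 0 ≤ 1 / 2 - x := by linarith
  calc (1 : ℝ) ≤ (1 - x) * (1 - x / 5) * (1 + x) ^ 2 := by
        nlinarith [mul_nonneg (mul_nonneg hx₀ hx') hx', mul_nonneg hx₀ hx',
          mul_nonneg (mul_nonneg (mul_nonneg hx₀ hx₀) hx') hx',
          mul_nonneg (mul_nonneg hx₀ hx₀) hx']
    _ ≤ (1 - x) * (1 - x / 5) * exp (2 * x) := by gcongr; nlinarith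

theorem mul_exp_neg_div_le {n m j t a r : ℝ} (hn : 0 < n) (hj : 1 ≤ j) (hjt : j + 1 ≤ t)
    (ha : 2 * n / (j + 1) ≤ a) (ham : a ≤ m) (hm : m ≤ 2 * n / j) (hr₀ : 0 ≤ r)
    (hr : r ≤ n / (5 * t ^ 2)) :
    m * exp (-(m / n)) ≤ (1 - 1 / (10 * t)) * (a - r) := by
  set x := 1 / (j + 1)
  set D := 2 * n / (j + 1)
  have hx₀ : 0 ≤ x := by positivity
  have hx : x ≤ 1 / 2 := by
    rw [div_le_div_iff₀ (by positivity) (by norm_num)]; linarith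
  have hexp : exp (-(m / n)) ≤ exp (-(2 * x)) := by
    gcongr
    rw [le_div_iff₀ hn]
    calc 2 * x * n = D := by simp only [x, D]; field_simp
      _ ≤ m := ha.trans ham
  have hD : 2 * n / j * (1 - x) = D := by simp only [x, D]; field_simp; ring
  have hrD : r ≤ D * x / 10 := by
    calc r ≤ n / (5 * t ^ 2) := hr
      _ ≤ n / (5 * (j + 1) ^ 2) := by gcongr
      _ = D * x / 10 := by simp only [x, D]; field_simp; ring
  have hxt : 1 / t ≤ x := one_div_le_one_div_of_le (by positivity) hjt
  have hDr : 0 ≤ D - r := by nlinarith [show 0 ≤ D by positivity]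
  calc m * exp (-(m / n)) ≤ 2 * n / j * ((1 - x) * (1 - x / 5)) :=
        mul_le_mul hm (hexp.trans (exp_neg_two_mul_le hx₀ hx)) (exp_pos _).le (by positivity)
    _ = D * (1 - x / 5) := by rw [← hD]; ring
    _ ≤ (1 - x / 10) * (D - r) := by nlinarith [mul_nonneg hr₀ hx₀]
    _ ≤ (1 - 1 / (10 * t)) * (D - r) := by
        refine mul_le_mul_of_nonneg_right ?_ hDr
        rw [show 1 / (10 * t) = 1 / t / 10 by ring]
        linarith
    _ ≤ (1 - 1 / (10 * t)) * (a - r) := by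
        have : 1 / (10 * t) ≤ 1 := by rw [div_le_one (by linarith)]; linarith
        gcongr

theorem one_sub_one_div_pow_le_one_div_pow {s n : ℝ} {k r : ℕ} (hs : 1 ≤ s) (hn : 0 < n)
    (hr : k * s * log n ≤ r) : (1 - 1 / s) ^ r ≤ 1 / n ^ k := by
  have hs₀ : 0 < s := by linarith
  calc (1 - 1 / s) ^ r ≤ exp (-(1 / s)) ^ r := by
        gcongr
        · rw [sub_nonneg, div_le_one hs₀]; exact hs
        · exact one_sub_le_exp_neg _
    _ = exp (-(r / s)) := by rw [← exp_nat_mul]; ring_nf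
    _ ≤ exp (-(k * log n)) := by
        gcongr
        rwa [le_div_iff₀ hs₀, mul_right_comm]
    _ = 1 / n ^ k := by rw [exp_neg, ← log_pow, exp_log (by positivity), one_div]

theorem eventually_ceil_mul_log_le {t : ℝ} (ht : 0 < t) :
    ∀ᶠ n : ℕ in atTop, (⌈30 * t * log n⌉₊ : ℝ) ≤ n / (5 * t ^ 2) := by
  have hlog : ∀ᶠ x : ℝ in atTop, log x ≤ 1 / (300 * t ^ 3) * x := by
    filter_upwards [isLittleO_log_id_atTop.bound (c := 1 / (300 * t ^ 3)) (by positivity),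
      eventually_ge_atTop 1] with x hx hx₁
    rwa [norm_of_nonneg (log_nonneg hx₁), norm_of_nonneg (by positivity : (0 : ℝ) ≤ id x)]
      at hx
  filter_upwards [tendsto_natCast_atTop_atTop.eventually
    (hlog.and (eventually_ge_atTop (10 * t ^ 2)))] with n ⟨hlog_n, hn⟩
  have hceil := Nat.ceil_lt_add_one (show 0 ≤ 30 * t * log n by positivity)
  have h1 : 30 * t * log n ≤ n / (10 * t ^ 2) := by
    calc 30 * t * log n ≤ 30 * t * (1 / (300 * t ^ 3) * n) := by gcongr
      _ = n / (10 * t ^ 2) := by field_simp; ring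
  have h2 : 1 ≤ n / (10 * t ^ 2) := by rwa [le_div_iff₀ (by positivity), one_mul]
  calc (⌈30 * t * log n⌉₊ : ℝ) ≤ n / (10 * t ^ 2) + n / (10 * t ^ 2) := by linarith
    _ = n / (5 * t ^ 2) := by field_simp; ring

theorem card_unproposed_ge_mul_sub_pow_le {n a r : ℕ} (hn : 0 < n) {A B : Finset (Fin n)}
    (hAB : #A = #B) (hra : r ≤ a) (hrn : r ≤ n) :
    (#{g : Fin n → Fin n | a ≤ #(unproposed A B g)} : ℝ) * ((a : ℝ) - r) ^ r ≤
      (n : ℝ) ^ n * (#B * exp (-(#B / n))) ^ r := by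
  have hnR : (0 : ℝ) < n := Nat.cast_pos.2 hn
  have hBn : #B ≤ n := by simpa using card_le_univ B
  have hcount : (#{g : Fin n → Fin n | a ≤ #(unproposed A B g)} : ℝ) * ((a : ℝ) - r) ^ r ≤
      (#B : ℝ) ^ r * (((n : ℝ) - r) ^ #B * (n : ℝ) ^ (n - #B)) := by
    have := card_le_card_unproposed_mul_sub_pow_le A B a r
    simp only [Fintype.card_fin, hAB] at this
    exact_mod_cast this
  have hdecay : ((n : ℝ) - r) ^ #B ≤ (n : ℝ) ^ #B * exp (-(#B / n)) ^ r := by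
    calc ((n : ℝ) - r) ^ #B = (n : ℝ) ^ #B * (1 - r / n) ^ #B := by
          rw [← mul_pow]; congr 1; field_simp
      _ ≤ (n : ℝ) ^ #B * exp (-(r / n)) ^ #B := by
          gcongr
          · rw [sub_nonneg, div_le_one hnR]; exact_mod_cast hrn
          · exact one_sub_le_exp_neg _
      _ = (n : ℝ) ^ #B * exp (-(#B / n)) ^ r := by
          rw [← exp_nat_mul, ← exp_nat_mul]; ring_nf
  calc _ ≤ (#B : ℝ) ^ r * (((n : ℝ) - r) ^ #B * (n : ℝ) ^ (n - #B)) := hcount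
    _ ≤ (#B : ℝ) ^ r * ((n : ℝ) ^ #B * exp (-(#B / n)) ^ r * (n : ℝ) ^ (n - #B)) := by
        gcongr
    _ = (n : ℝ) ^ n * (#B * exp (-(#B / n))) ^ r := by
        rw [mul_pow, ← pow_mul_pow_sub (n : ℝ) hBn]; ring

theorem card_unproposed_gt_le {n t j r : ℕ} (hn : 0 < n) (hj : 1 ≤ j) (hjt : j + 1 ≤ t)
    (hlog : 30 * t * log n ≤ r) (hr : (r : ℝ) ≤ n / (5 * t ^ 2))
    {A B : Finset (Fin n)} (hAB : #A = #B) (hB : (#B : ℝ) ≤ 2 * n / j) :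
    (#{g : Fin n → Fin n | 2 * (n : ℝ) / (j + 1) < #(unproposed A B g)} : ℝ) ≤
      (n : ℝ) ^ n / (n : ℝ) ^ 3 := by
  have hnR : (0 : ℝ) < n := Nat.cast_pos.2 hn
  have htR : (j : ℝ) + 1 ≤ t := by exact_mod_cast hjt
  have ht₀ : (0 : ℝ) < t := by linarith [(Nat.cast_nonneg j : (0 : ℝ) ≤ j)]
  set D : ℝ := 2 * n / (j + 1)
  set a := ⌊D⌋₊ + 1
  have hDa : D < a := by simpa [a] using Nat.lt_floor_add_one D
  have hevent : #{g : Fin n → Fin n | D < #(unproposed A B g)} =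
      #{g : Fin n → Fin n | a ≤ #(unproposed A B g)} :=
    congrArg card <| filter_congr fun g _ => by
      rw [Nat.add_one_le_iff, Nat.floor_lt (by positivity)]
  rw [hevent]
  obtain haB | haB := lt_or_ge #B a
  · have hempty : #{g : Fin n → Fin n | a ≤ #(unproposed A B g)} = 0 :=
      card_eq_zero.2 <| filter_eq_empty_iff.2 fun g _ =>
        not_le.2 ((card_unproposed_le A B g).trans_lt haB)
    rw [hempty, Nat.cast_zero]
    positivity
  have hrD : (r : ℝ) < D := by
    calc (r : ℝ) ≤ n / (5 * t ^ 2) := hr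
      _ < 2 * n / t := by
        have : (1 : ℝ) ≤ j := by exact_mod_cast hj
        rw [div_lt_div_iff₀ (by positivity) ht₀]
        nlinarith [mul_pos (mul_pos hnR ht₀) (show (0 : ℝ) < 10 * t - 1 by linarith)]
      _ ≤ D := div_le_div_of_nonneg_left (by positivity) (by positivity) htR
  have hra : r ≤ a := by exact_mod_cast (hrD.trans hDa).le
  have hrn : r ≤ n := hra.trans (haB.trans (by simpa using card_le_univ B))
  have hpos : (0 : ℝ) < ((a : ℝ) - r) ^ r := pow_pos (by linarith) r
  rw [← mul_le_mul_iff_of_pos_right hpos]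
  calc _ ≤ (n : ℝ) ^ n * (#B * exp (-(#B / n))) ^ r :=
        card_unproposed_ge_mul_sub_pow_le hn hAB hra hrn
    _ ≤ (n : ℝ) ^ n * ((1 - 1 / (10 * t)) * (a - r)) ^ r := by
        gcongr (n : ℝ) ^ n * ?_ ^ r
        exact mul_exp_neg_div_le hnR (by exact_mod_cast hj) htR hDa.le (by exact_mod_cast haB) hB
          (Nat.cast_nonneg r) hr
    _ = (n : ℝ) ^ n * (1 - 1 / (10 * t)) ^ r * ((a : ℝ) - r) ^ r := by rw [mul_pow, mul_assoc]
    _ ≤ (n : ℝ) ^ n * (1 / (n : ℝ) ^ 3) * ((a : ℝ) - r) ^ r := by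
        gcongr
        exact one_sub_one_div_pow_le_one_div_pow (by linarith) hnR (by push_cast; linarith)
    _ = (n : ℝ) ^ n / (n : ℝ) ^ 3 * ((a : ℝ) - r) ^ r := by ring

section ProposalRounds

variable {n : ℕ} {pick : Finset (Fin n) → Fin n}

theorem proposalStep_snd (g : Fin n → Fin n) (st : Finset (Fin n) × Finset (Fin n)) :
    (proposalStep n pick g st).2 = unproposed st.1 st.2 g := by
  simp [proposalStep, unproposed, proposersTo, filter_nonempty_iff]

theorem proposalState_congr {c c' : ℕ → Fin n → Fin n} {k : ℕ} (h : ∀ i < k, c i = c' i) :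
    proposalState n pick c k = proposalState n pick c' k := by
  induction k with
  | zero => rfl
  | succ k ih =>
    rw [proposalState, proposalState, ih fun i hi => h i (by omega), h k (by omega)]

theorem card_proposalStep_fst_eq_snd (hpick : ∀ S : Finset (Fin n), S.Nonempty → pick S ∈ S)
    (g : Fin n → Fin n) {st : Finset (Fin n) × Finset (Fin n)} (h : #st.1 = #st.2) :
    #(proposalStep n pick g st).1 = #(proposalStep n pick g st).2 := by
  set M := st.2.filter fun w => (proposersTo n st.1 g w).Nonempty
  have hmem : ∀ w ∈ M, pick (proposersTo n st.1 g w) ∈ proposersTo n st.1 g w :=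
    fun w hw => hpick _ (mem_filter.1 hw).2
  have hinj : Set.InjOn (fun w => pick (proposersTo n st.1 g w)) M := by
    intro w₁ h₁ w₂ h₂ he
    rw [← (mem_filter.1 (hmem w₁ h₁)).2, ← (mem_filter.1 (hmem w₂ h₂)).2]
    exact congrArg g he
  have hsub : M.image (fun w => pick (proposersTo n st.1 g w)) ⊆ st.1 := by
    intro m hm
    obtain ⟨w, hw, rfl⟩ := mem_image.1 hm
    exact (mem_filter.1 (hmem w hw)).1
  have hsplit : #M + #{w ∈ st.2 | ¬(proposersTo n st.1 g w).Nonempty} = #st.2 :=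
    card_filter_add_card_filter_not _
  simp only [proposalStep]
  rw [card_sdiff_of_subset hsub, card_image_of_injOn hinj, h, ← hsplit, Nat.add_sub_cancel_left]

theorem card_proposalState_fst_eq_snd (hpick : ∀ S : Finset (Fin n), S.Nonempty → pick S ∈ S)
    (c : ℕ → Fin n → Fin n) (k : ℕ) :
    #(proposalState n pick c k).1 = #(proposalState n pick c k).2 := by
  induction k with
  | zero => rfl
  | succ k ih => exact card_proposalStep_fst_eq_snd hpick _ ih

end ProposalRounds

theorem exists_unmatched_crossing {n t : ℕ} {pick : Finset (Fin n) → Fin n} (ht : 1 ≤ t)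
    (c : ℕ → Fin n → Fin n) (hc : 2 * (n : ℝ) / t < #(proposalState n pick c t).2) :
    ∃ j ∈ Ico 1 t, (#(proposalState n pick c j).2 : ℝ) ≤ 2 * n / j ∧
      2 * (n : ℝ) / (j + 1) < #(proposalState n pick c (j + 1)).2 := by
  have h₁ : (#(proposalState n pick c 1).2 : ℝ) ≤ 2 * n / (1 : ℕ) := by
    have : (#(proposalState n pick c 1).2 : ℝ) ≤ n := by
      exact_mod_cast (card_le_univ _).trans_eq (Fintype.card_fin n)
    rw [Nat.cast_one, div_one]
    linarith
  obtain ⟨j, hj, hle, hgt⟩ := exists_mem_Ico_and_not_succ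
    (P := fun k => (#(proposalState n pick c k).2 : ℝ) ≤ 2 * n / k) ht h₁ (not_le.2 hc)
  push_cast at hgt
  exact ⟨j, hj, hle, not_le.1 hgt⟩

def roundChoices {t n : ℕ} (c : Fin t → Fin n → Fin n) : ℕ → Fin n → Fin n :=
  fun r m => if h : r < t then c ⟨r, h⟩ m else m

theorem roundChoices_update_of_ne {t n : ℕ} (c : Fin t → Fin n → Fin n) (j : Fin t)
    (g : Fin n → Fin n) {i : ℕ} (hi : i ≠ j) :
    roundChoices (Function.update c j g) i = roundChoices c i := by
  funext m
  unfold roundChoices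
  split_ifs with h
  · rw [Function.update_of_ne (fun e => hi (congrArg Fin.val e))]
  · rfl

theorem roundChoices_update_self {t n : ℕ} (c : Fin t → Fin n → Fin n) (j : Fin t)
    (g : Fin n → Fin n) : roundChoices (Function.update c j g) j = g := by
  funext m
  simp [roundChoices]

theorem card_unmatched_crossing_le {n t j r : ℕ} {pick : Finset (Fin n) → Fin n}
    (hpick : ∀ S : Finset (Fin n), S.Nonempty → pick S ∈ S) (hn : 0 < n) (hj : 1 ≤ j)
    (hjt : j + 1 ≤ t) (hlog : 30 * t * log n ≤ r) (hr : (r : ℝ) ≤ n / (5 * t ^ 2)) :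
    (#{c : Fin t → Fin n → Fin n |
        (#(proposalState n pick (roundChoices c) j).2 : ℝ) ≤ 2 * n / j ∧
          2 * (n : ℝ) / (j + 1) < #(proposalState n pick (roundChoices c) (j + 1)).2} : ℝ) ≤
      1 / (n : ℝ) ^ 3 * Fintype.card (Fin t → Fin n → Fin n) := by
  set j' : Fin t := ⟨j, by omega⟩
  refine card_le_mul_card_of_card_update_le j' _ fun c => ?_
  set st := proposalState n pick (roundChoices c) j
  have hstate : ∀ g, proposalState n pick (roundChoices (Function.update c j' g)) j = st :=
    fun g => proposalState_congr fun i hi => roundChoices_update_of_ne c j' g hi.ne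
  have hnext : ∀ g, proposalState n pick (roundChoices (Function.update c j' g)) (j + 1) =
      proposalStep n pick g st := fun g => by
    rw [proposalState, hstate]
    exact congrArg (proposalStep n pick · st) (roundChoices_update_self c j' g)
  simp only [mem_filter, mem_univ, true_and, hstate, hnext, proposalStep_snd]
  by_cases hB : (#st.2 : ℝ) ≤ 2 * n / j
  · simp only [hB, true_and, Fintype.card_fun, Fintype.card_fin, Nat.cast_pow]
    rw [one_div_mul_eq_div]
    exact card_unproposed_gt_le hn hj hjt hlog hr (card_proposalState_fst_eq_snd hpick _ j) hB
  · simp [hB]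
    positivity

open Classical in
/-- For fixed `t ≥ 1` and all sufficiently large `n`, for any rule `pick` by which a
proposed-to woman selects one of her proposers, the probability (over the uniformly
random proposals of the `t` rounds) that more than `2n/t` women remain unmatched
after `t` rounds is at most `t/n³`. -/
theorem proposal_process_tail_bound (t : ℕ) (ht : 1 ≤ t) :
    ∃ N₀ : ℕ, ∀ n : ℕ, N₀ ≤ n →
      ∀ pick : Finset (Fin n) → Fin n,
        (∀ S : Finset (Fin n), S.Nonempty → pick S ∈ S) →
        ((Finset.univ.filter (fun c : Fin t → Fin n → Fin n =>
            2 * (n : ℝ) / t <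
              ((proposalState n pick
                  (fun r m => if h : r < t then c ⟨r, h⟩ m else m) t).2.card : ℝ))).card : ℝ)
          / (Fintype.card (Fin t → Fin n → Fin n) : ℝ)
        ≤ (t : ℝ) / (n : ℝ) ^ 3 := by
  have ht₀ : (0 : ℝ) < t := by exact_mod_cast ht
  obtain ⟨N₀, hN₀⟩ := eventually_atTop.1
    ((eventually_ceil_mul_log_le ht₀).and (eventually_gt_atTop 0))
  refine ⟨N₀, fun n hN pick hpick => ?_⟩
  obtain ⟨hr, hn⟩ := hN₀ n hN
  have hcover : univ.filter (fun c : Fin t → Fin n → Fin n =>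
      2 * (n : ℝ) / t < #(proposalState n pick (roundChoices c) t).2) ⊆
      (Ico 1 t).biUnion fun j => univ.filter fun c =>
        (#(proposalState n pick (roundChoices c) j).2 : ℝ) ≤ 2 * n / j ∧
          2 * (n : ℝ) / (j + 1) < #(proposalState n pick (roundChoices c) (j + 1)).2 := by
    intro c hc
    obtain ⟨j, hj, hcross⟩ := exists_unmatched_crossing ht _ (mem_filter.1 hc).2
    exact mem_biUnion.2 ⟨j, hj, mem_filter.2 ⟨mem_univ _, hcross⟩⟩
  rw [div_le_iff₀ (Nat.cast_pos.2 (Fintype.card_pos_iff.2 ⟨fun _ m => m⟩))]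
  calc _ ≤ ∑ j ∈ Ico 1 t, (#{c : Fin t → Fin n → Fin n |
          (#(proposalState n pick (roundChoices c) j).2 : ℝ) ≤ 2 * n / j ∧
            2 * (n : ℝ) / (j + 1) < #(proposalState n pick (roundChoices c) (j + 1)).2} :
          ℝ) := by
        exact_mod_cast (card_le_card hcover).trans card_biUnion_le
    _ ≤ ∑ _j ∈ Ico 1 t, 1 / (n : ℝ) ^ 3 * Fintype.card (Fin t → Fin n → Fin n) :=
        sum_le_sum fun j hj => card_unmatched_crossing_le hpick hn (mem_Ico.1 hj).1
          (mem_Ico.1 hj).2 (Nat.le_ceil _) hr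
    _ ≤ t / (n : ℝ) ^ 3 * Fintype.card (Fin t → Fin n → Fin n) := by
        rw [sum_const, Nat.card_Ico, nsmul_eq_mul, ← mul_assoc, mul_one_div]
        gcongr
        exact_mod_cast Nat.sub_le t 1
end
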